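/- Let f, g : ℤ × ℤ → ℝ, let k, r be positive integers, and define P(h)(x,y) = (1/2)[h(x,1) + h(x,r+1) + h(1,y) + h(k+1,y)] - (1/4)[h(1,1) + h(1,r+1) + h(k+1,1) + h(k+1,r+1)] and let Δ₂Δ₁h(s,t) = h(s+1,t+1) - h(s+1,t) - h(s,t+1) + h(s,t). Then |∑_{x=1}^{k} ∑_{y=1}^{r} [f(x,y)g(x,y) - (1/2)(g(x,y) P(f)(x,y) + f(x,y) P(g)(x,y))]| ≤ (1/8) k r ∑_{x=1}^{k} ∑_{y=1}^{r} [|g(x,y)| ‖Δ₂Δ₁f‖_∞ + |f(x,y)| ‖Δ₂Δ₁g‖_∞], where ‖Δ₂Δ₁h‖_∞ = max over 1 ≤ s ≤ k, 1 ≤ t ≤ r of |Δ₂Δ₁h(s,t)|. -/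
import Mathlib


open Finset

/-- Mixed forward difference operator. -/
def dd (h : ℤ → ℤ → ℝ) (s t : ℤ) : ℝ :=
  h (s + 1) (t + 1) - h (s + 1) t - h s (t + 1) + h s t

/-- Discrete boundary-average functional on the grid `{1,…,k+1} × {1,…,r+1}`. -/
noncomputable def Pd (k r : ℤ) (h : ℤ → ℤ → ℝ) (x y : ℤ) : ℝ :=
  (1 / 2) * (h x 1 + h x (r + 1) + h 1 y + h (k + 1) y)
    - (1 / 4) * (h 1 1 + h 1 (r + 1) + h (k + 1) 1 + h (k + 1) (r + 1))

/-- Telescoping sum over an integer interval. -/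
lemma tel (u : ℤ → ℝ) (a : ℤ) : ∀ b : ℤ, a - 1 ≤ b →
    ∑ s ∈ Icc a b, (u (s + 1) - u s) = u (b + 1) - u a := by
  refine Int.le_induction ?_ ?_
  · rw [show a - 1 + 1 = a by ring, Icc_eq_empty (by omega)]
    simp
  · intro b hb ih
    have hins : Icc a (b + 1) = insert (b + 1) (Icc a b) := by
      ext s; simp only [mem_Icc, mem_insert]; omega
    rw [hins, Finset.sum_insert (by simp), ih]
    ring

/-- Peano-type kernel. -/
noncomputable def pk (x s : ℤ) : ℝ := if s < x then 1/2 else -(1/2)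

lemma abs_pk (x s : ℤ) : |pk x s| = 1/2 := by
  rw [pk]; split <;> simp [abs_of_nonneg, abs_of_nonpos]

/-- One-dimensional discrete Montgomery identity. -/
lemma kern (u : ℤ → ℝ) (k x : ℤ) (hx : 1 ≤ x) (hxk : x ≤ k + 1) :
    ∑ s ∈ Icc 1 k, pk x s * (u (s + 1) - u s) = u x - (u 1 + u (k + 1)) / 2 := by
  have hsplit : Icc (1:ℤ) k = Icc 1 (x-1) ∪ Icc x k := by
    ext s; simp only [mem_Icc, mem_union]; omega
  have hdisj : Disjoint (Icc (1:ℤ) (x-1)) (Icc x k) := by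
    rw [Finset.disjoint_left]; intro s hs hs'
    simp only [mem_Icc] at hs hs'; omega
  rw [hsplit, Finset.sum_union hdisj]
  have h1 : ∑ s ∈ Icc (1:ℤ) (x-1), pk x s * (u (s + 1) - u s)
      = (1/2) * (u x - u 1) := by
    have t1 := tel u 1 (x-1) (by omega)
    rw [show x - 1 + 1 = x by ring] at t1
    rw [← t1, Finset.mul_sum]
    refine Finset.sum_congr rfl fun s hs => ?_
    simp only [mem_Icc] at hs
    rw [pk, if_pos (by omega)]
  have h2 : ∑ s ∈ Icc x k, pk x s * (u (s + 1) - u s)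
      = -(1/2) * (u (k+1) - u x) := by
    rw [← tel u x k (by omega), Finset.mul_sum]
    refine Finset.sum_congr rfl fun s hs => ?_
    simp only [mem_Icc] at hs
    rw [pk, if_neg (by omega)]
  rw [h1, h2]; ring

/-- Two-dimensional discrete Montgomery identity. -/
lemma ident (h : ℤ → ℤ → ℝ) (k r x y : ℤ)
    (hx : 1 ≤ x) (hxk : x ≤ k + 1) (hy : 1 ≤ y) (hyr : y ≤ r + 1) :
    h x y - Pd k r h x y
      = ∑ s ∈ Icc 1 k, ∑ t ∈ Icc 1 r, pk x s * pk y t * dd h s t := by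
  set w : ℤ → ℝ := fun t => h x t - (h 1 t + h (k + 1) t) / 2 with hw
  have step1 : ∀ t : ℤ, ∑ s ∈ Icc 1 k, pk x s * dd h s t = w (t + 1) - w t := by
    intro t
    have hk' := kern (fun s => h s (t + 1) - h s t) k x hx hxk
    have : ∀ s ∈ Icc (1:ℤ) k, pk x s * dd h s t
        = pk x s * ((fun s => h s (t + 1) - h s t) (s + 1)
            - (fun s => h s (t + 1) - h s t) s) := by
      intro s _; simp only [dd]; ring
    rw [Finset.sum_congr rfl this, hk']
    simp only [hw]; ring
  calc h x y - Pd k r h x y = w y - (w 1 + w (r + 1)) / 2 := by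
        simp only [hw, Pd]; ring
    _ = ∑ t ∈ Icc 1 r, pk y t * (w (t + 1) - w t) := (kern w r y hy hyr).symm
    _ = ∑ t ∈ Icc 1 r, pk y t * ∑ s ∈ Icc 1 k, pk x s * dd h s t := by
        refine Finset.sum_congr rfl fun t _ => ?_; rw [step1]
    _ = ∑ s ∈ Icc 1 k, ∑ t ∈ Icc 1 r, pk x s * pk y t * dd h s t := by
        rw [Finset.sum_comm]
        refine Finset.sum_congr rfl fun t _ => ?_
        rw [Finset.mul_sum]
        refine Finset.sum_congr rfl fun s _ => ?_; ring

/-- Pointwise bound: the deviation from the boundary average is controlled by the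
sup-norm of the mixed difference. -/
lemma pointbound (h : ℤ → ℤ → ℝ) (k r x y : ℤ) (hk : 1 ≤ k) (hr : 1 ≤ r)
    (hx : 1 ≤ x) (hxk : x ≤ k) (hy : 1 ≤ y) (hyr : y ≤ r) :
    |h x y - Pd k r h x y| ≤ 1/4 * (k : ℝ) * (r : ℝ) *
      ((Icc (1 : ℤ) k ×ˢ Icc (1 : ℤ) r).sup'
        ((nonempty_Icc.2 hk).product (nonempty_Icc.2 hr))
        (fun p => |dd h p.1 p.2|)) := by
  set M := (Icc (1 : ℤ) k ×ˢ Icc (1 : ℤ) r).sup'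
        ((nonempty_Icc.2 hk).product (nonempty_Icc.2 hr))
        (fun p => |dd h p.1 p.2|) with hM
  rw [ident h k r x y hx (by omega) hy (by omega)]
  calc |∑ s ∈ Icc 1 k, ∑ t ∈ Icc 1 r, pk x s * pk y t * dd h s t|
      ≤ ∑ s ∈ Icc 1 k, ∑ t ∈ Icc (1:ℤ) r, |pk x s * pk y t * dd h s t| := by
        refine (Finset.abs_sum_le_sum_abs _ _).trans ?_
        exact Finset.sum_le_sum fun s _ => Finset.abs_sum_le_sum_abs _ _
    _ ≤ ∑ s ∈ Icc 1 k, ∑ t ∈ Icc (1:ℤ) r, 1/4 * M := by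
        refine Finset.sum_le_sum fun s hs => Finset.sum_le_sum fun t ht => ?_
        rw [abs_mul, abs_mul, abs_pk, abs_pk]
        have hle : |dd h s t| ≤ M :=
          Finset.le_sup' (b := (s, t)) (fun p : ℤ × ℤ => |dd h p.1 p.2|)
            (Finset.mem_product.2 ⟨hs, ht⟩)
        nlinarith [abs_nonneg (dd h s t)]
    _ = 1/4 * (k : ℝ) * (r : ℝ) * M := by
        rw [Finset.sum_const, Finset.sum_const, nsmul_eq_mul, nsmul_eq_mul,
          Int.card_Icc, Int.card_Icc]
        have h1 : ((k + 1 - 1).toNat : ℝ) = (k : ℝ) := by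
          have : ((k + 1 - 1).toNat : ℤ) = k := by omega
          exact_mod_cast this
        have h2 : ((r + 1 - 1).toNat : ℝ) = (r : ℝ) := by
          have : ((r + 1 - 1).toNat : ℤ) = r := by omega
          exact_mod_cast this
        rw [h1, h2]; ring

theorem discrete_ostrowski
    (k r : ℤ) (hk : 1 ≤ k) (hr : 1 ≤ r) (f g : ℤ → ℤ → ℝ) :
    |∑ x ∈ Icc (1 : ℤ) k, ∑ y ∈ Icc (1 : ℤ) r,
        (f x y * g x y
          - (1 / 2) * (g x y * Pd k r f x y + f x y * Pd k r g x y))| ≤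
      (1 / 8) * (k : ℝ) * (r : ℝ) *
        ∑ x ∈ Icc (1 : ℤ) k, ∑ y ∈ Icc (1 : ℤ) r,
          (|g x y| * ((Icc (1 : ℤ) k ×ˢ Icc (1 : ℤ) r).sup'
                ((nonempty_Icc.2 hk).product (nonempty_Icc.2 hr))
                (fun p => |dd f p.1 p.2|))
            + |f x y| * ((Icc (1 : ℤ) k ×ˢ Icc (1 : ℤ) r).sup'
                ((nonempty_Icc.2 hk).product (nonempty_Icc.2 hr))
                (fun p => |dd g p.1 p.2|))) := by
  set Mf := (Icc (1 : ℤ) k ×ˢ Icc (1 : ℤ) r).sup'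
        ((nonempty_Icc.2 hk).product (nonempty_Icc.2 hr))
        (fun p => |dd f p.1 p.2|) with hMf
  set Mg := (Icc (1 : ℤ) k ×ˢ Icc (1 : ℤ) r).sup'
        ((nonempty_Icc.2 hk).product (nonempty_Icc.2 hr))
        (fun p => |dd g p.1 p.2|) with hMg
  have key : ∀ x ∈ Icc (1:ℤ) k, ∀ y ∈ Icc (1:ℤ) r,
      |f x y * g x y
          - (1 / 2) * (g x y * Pd k r f x y + f x y * Pd k r g x y)|
        ≤ 1/8 * (k : ℝ) * (r : ℝ) * (|g x y| * Mf + |f x y| * Mg) := by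
    intro x hx y hy
    simp only [mem_Icc] at hx hy
    have bf := pointbound f k r x y hk hr hx.1 hx.2 hy.1 hy.2
    have bg := pointbound g k r x y hk hr hx.1 hx.2 hy.1 hy.2
    rw [← hMf] at bf
    rw [← hMg] at bg
    have e : f x y * g x y
          - (1 / 2) * (g x y * Pd k r f x y + f x y * Pd k r g x y)
        = (1/2) * (g x y * (f x y - Pd k r f x y))
          + (1/2) * (f x y * (g x y - Pd k r g x y)) := by ring
    rw [e]
    calc |(1/2) * (g x y * (f x y - Pd k r f x y))
            + (1/2) * (f x y * (g x y - Pd k r g x y))|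
        ≤ |(1/2) * (g x y * (f x y - Pd k r f x y))|
            + |(1/2) * (f x y * (g x y - Pd k r g x y))| := abs_add_le _ _
      _ = (1/2) * |g x y| * |f x y - Pd k r f x y|
            + (1/2) * |f x y| * |g x y - Pd k r g x y| := by
          rw [abs_mul, abs_mul, abs_mul, abs_mul,
            show |(1/2 : ℝ)| = 1/2 from abs_of_nonneg (by norm_num)]
          ring
      _ ≤ (1/2) * |g x y| * (1/4 * (k : ℝ) * (r : ℝ) * Mf)
            + (1/2) * |f x y| * (1/4 * (k : ℝ) * (r : ℝ) * Mg) := by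
          refine add_le_add ?_ ?_
          · exact mul_le_mul_of_nonneg_left bf (by positivity)
          · exact mul_le_mul_of_nonneg_left bg (by positivity)
      _ = 1/8 * (k : ℝ) * (r : ℝ) * (|g x y| * Mf + |f x y| * Mg) := by ring
  have hrw : (1 / 8) * (k : ℝ) * (r : ℝ) *
        ∑ x ∈ Icc (1 : ℤ) k, ∑ y ∈ Icc (1 : ℤ) r,
          (|g x y| * Mf + |f x y| * Mg)
      = ∑ x ∈ Icc (1 : ℤ) k, ∑ y ∈ Icc (1 : ℤ) r,
          1/8 * (k : ℝ) * (r : ℝ) * (|g x y| * Mf + |f x y| * Mg) := by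
    rw [Finset.mul_sum]
    exact Finset.sum_congr rfl fun x _ => Finset.mul_sum _ _ _
  rw [hrw]
  refine (Finset.abs_sum_le_sum_abs _ _).trans ?_
  refine Finset.sum_le_sum fun x hx => ?_
  refine (Finset.abs_sum_le_sum_abs _ _).trans ?_
  exact Finset.sum_le_sum fun y hy => key x hx y hy
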